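/- arXiv:math/0002136 — 5 statements merged into one kernel-verified Lean document; each statement's English description precedes it below -/
import Mathlib

section
/- In any associative unital ring containing elements G_{i-2}, G_{i-1}, G_i, E_{i-2}, E_{i-1}, E_i satisfying the relevant BMW relations, one has E_{i-2} G_i E_{i-1} E_i = E_{i-2} E_{i-1} G_{i-2} E_i. -/
/-- Lemma 2 of the paper: with elements `G₂ = G_{i-2}`, `G₁ = G_{i-1}`, `G₀ = G_i`
(invertible, with inverses `G₂inv`, `G₁inv`, `G₀inv`) and `E₂ = E_{i-2}`,
`E₁ = E_{i-1}`, `E₀ = E_i` of an associative unital ring satisfying the relevant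
BMW relations, one has `E_{i-2} G_i E_{i-1} E_i = E_{i-2} E_{i-1} G_{i-2} E_i`. -/
theorem stmt_2 {R : Type*} [Ring R]
    (G₂ G₁ G₀ G₂inv G₁inv G₀inv E₂ E₁ E₀ linv : R)
    (h2a : G₂ * G₂inv = 1) (h2b : G₂inv * G₂ = 1)
    (h1a : G₁ * G₁inv = 1) (h1b : G₁inv * G₁ = 1)
    (h0a : G₀ * G₀inv = 1) (h0b : G₀inv * G₀ = 1)
    -- G_{j±1} E_j E_{j±1} = G_j⁻¹ E_{j±1}
    (hGEE1 : G₀ * E₁ * E₀ = G₁inv * E₀)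
    (hGEE2 : G₂ * E₁ * E₂ = G₁inv * E₂)
    (hGEE3 : G₁ * E₂ * E₁ = G₂inv * E₁)
    (hGEE4 : G₁ * E₀ * E₁ = G₀inv * E₁)
    -- E_{j±1} E_j G_{j±1} = E_{j±1} G_j⁻¹
    (hEEG1 : E₀ * E₁ * G₀ = E₀ * G₁inv)
    (hEEG2 : E₂ * E₁ * G₂ = E₂ * G₁inv)
    (hEEG3 : E₁ * E₂ * G₁ = E₁ * G₂inv)
    (hEEG4 : E₁ * E₀ * G₁ = E₁ * G₀inv)
    -- G_j E_j = E_j G_j = l⁻¹ E_j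
    (hGE0 : G₀ * E₀ = linv * E₀) (hEG0 : E₀ * G₀ = linv * E₀)
    (hGE1 : G₁ * E₁ = linv * E₁) (hEG1 : E₁ * G₁ = linv * E₁)
    (hGE2 : G₂ * E₂ = linv * E₂) (hEG2 : E₂ * G₂ = linv * E₂)
    -- E_j E_{j±1} E_j = E_j
    (hEEE1 : E₀ * E₁ * E₀ = E₀) (hEEE2 : E₁ * E₀ * E₁ = E₁)
    (hEEE3 : E₁ * E₂ * E₁ = E₁) (hEEE4 : E₂ * E₁ * E₂ = E₂)
    -- far commutation (|j - k| ≥ 2)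
    (hEEfar : E₂ * E₀ = E₀ * E₂)
    (hGEfar1 : G₂ * E₀ = E₀ * G₂)
    (hGEfar2 : G₀ * E₂ = E₂ * G₀) :
    E₂ * G₀ * E₁ * E₀ = E₂ * E₁ * G₂ * E₀ := by
  have h1 : E₂ * G₀ * E₁ * E₀ = E₂ * (G₀ * E₁ * E₀) := by noncomm_ring
  rw [h1, hGEE1, ← mul_assoc, ← hEEG2]
end

section
/- Let q, t be invertible elements of a commutative ring R, and let V be the free R-module with basis v_{ij} for 1 ≤ i < j ≤ n. Define R-linear maps ρ(σ_i) for 1 ≤ i ≤ n-1 by Krammer's formulas: ρ(σ_i) v_{i,i+1} = t q² v_{i,i+1}; ρ(σ_i) v_{jk} = v_{jk} if {i,i+1} ∩ {j,k} = ∅; ρ(σ_i) v_{i+1,j} = v_{ij} for j ≠ i, i+1; ρ(σ_i) v_{j,i} = v_{j,i+1} for j < i; ρ(σ_i) v_{ij} = t q(q-1) v_{i,i+1} + (1-q) v_{ij} + q v_{i+1,j} for i+1 < j; ρ(σ_i) v_{ji} = (1-q) v_{ji} + q v_{j,i+1} + q(q-1) v_{i,i+1} for j < i. Then ρ(σ_i)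 ρ(σ_j) = ρ(σ_j) ρ(σ_i) whenever |i-j| ≥ 2. -/
/-- Index set for the Krammer basis: pairs `(a, b)` with `1 ≤ a < b ≤ n`. -/
def KIdx (n : ℕ) : Type := {p : ℕ × ℕ // 1 ≤ p.1 ∧ p.1 < p.2 ∧ p.2 ≤ n}

/-- The basis vector `v_{a b}` of the free module `KIdx n →₀ R`
(zero if the indices are out of range). -/
noncomputable def kv (R : Type*) [CommRing R] (n a b : ℕ) : KIdx n →₀ R :=
  if h : 1 ≤ a ∧ a < b ∧ b ≤ n then Finsupp.single ⟨(a, b), h⟩ 1 else 0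

/-!
Since `i + 1 < j`, the index pairs `{i, i+1}` and `{j, j+1}` are disjoint. Each `ρ k` sends `v_{ab}`
into the span of the `v_{cd}` with `c, d ∈ {a, b, k, k+1}` and fixes every `v_{cd}` with `c, d`
outside `{k, k+1}`. Hence if `v_{ab}` avoids one of the two pairs, say `{j, j+1}`, then `ρ j` fixes
both `v_{ab}` and `ρ i v_{ab}`, and the two maps commute on `v_{ab}`. The only remaining basis
vectors are `v_{ab}` with `a ∈ {i, i+1}` and `b ∈ {j, j+1}`, checked by direct computation.
-/

section

variable {R : Type*} [CommRing R] {n : ℕ}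

theorem exists_single_one_eq_kv (x : KIdx n) :
    ∃ a b, 1 ≤ a ∧ a < b ∧ b ≤ n ∧ Finsupp.single x (1 : R) = kv R n a b := by
  obtain ⟨⟨a, b⟩, hab⟩ := x
  exact ⟨a, b, hab.1, hab.2.1, hab.2.2, by rw [kv, dif_pos hab]⟩

theorem linearMap_ext_kv {f g : (KIdx n →₀ R) →ₗ[R] (KIdx n →₀ R)}
    (h : ∀ a b, 1 ≤ a → a < b → b ≤ n → f (kv R n a b) = g (kv R n a b)) : f = g := by
  refine Finsupp.lhom_ext fun x r => ?_
  obtain ⟨a, b, ha, hab, hbn, hx⟩ := exists_single_one_eq_kv (R := R) x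
  rw [← Finsupp.smul_single_one, map_smul, map_smul, hx, h a b ha hab hbn]

structure IsKrammerAction (q t : R) (ρ : ℕ → ((KIdx n →₀ R) →ₗ[R] (KIdx n →₀ R))) : Prop where
  apply_kv_self_succ : ∀ i, 1 ≤ i → i + 1 ≤ n →
    ρ i (kv R n i (i+1)) = (t * q ^ 2) • kv R n i (i+1)
  apply_kv_of_disjoint : ∀ i a b, 1 ≤ i → i + 1 ≤ n → 1 ≤ a → a < b → b ≤ n →
    i ≠ a → i ≠ b → i + 1 ≠ a → i + 1 ≠ b → ρ i (kv R n a b) = kv R n a b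
  apply_kv_succ_left : ∀ i b, 1 ≤ i → i + 1 < b → b ≤ n → ρ i (kv R n (i+1) b) = kv R n i b
  apply_kv_succ_right : ∀ i a, 1 ≤ a → a < i → i + 1 ≤ n → ρ i (kv R n a (i+1)) = kv R n a i
  apply_kv_self_left : ∀ i b, 1 ≤ i → i + 1 < b → b ≤ n →
    ρ i (kv R n i b) =
      (t * q * (q - 1)) • kv R n i (i+1) + (1 - q) • kv R n i b + q • kv R n (i+1) b
  apply_kv_self_right : ∀ i a, 1 ≤ a → a < i → i + 1 ≤ n →
    ρ i (kv R n a i) =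
      (1 - q) • kv R n a i + q • kv R n a (i+1) + (q * (q - 1)) • kv R n i (i+1)

namespace IsKrammerAction

variable {q t : R} {ρ : ℕ → ((KIdx n →₀ R) →ₗ[R] (KIdx n →₀ R))}

theorem apply_kv_eq_self (h : IsKrammerAction q t ρ) {k a b : ℕ} (hk : 1 ≤ k) (hkn : k + 1 ≤ n)
    (hak : a ≠ k) (hak' : a ≠ k + 1) (hbk : b ≠ k) (hbk' : b ≠ k + 1) :
    ρ k (kv R n a b) = kv R n a b := by
  by_cases hab : 1 ≤ a ∧ a < b ∧ b ≤ n
  · exact h.apply_kv_of_disjoint k a b hk hkn hab.1 hab.2.1 hab.2.2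
      hak.symm hbk.symm hak'.symm hbk'.symm
  · rw [kv, dif_neg hab, map_zero]

theorem apply_kv_mem_span (h : IsKrammerAction q t ρ) {k a b : ℕ} (hk : 1 ≤ k)
    (hkn : k + 1 ≤ n) :
    ρ k (kv R n a b) ∈
      Submodule.span R (Set.image2 (kv R n) {a, b, k, k + 1} {a, b, k, k + 1}) := by
  have mem : ∀ c ∈ ({a, b, k, k + 1} : Set ℕ), ∀ d ∈ ({a, b, k, k + 1} : Set ℕ),
      kv R n c d ∈ Submodule.span R (Set.image2 (kv R n) {a, b, k, k + 1} {a, b, k, k + 1}) :=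
    fun c hc d hd => Submodule.subset_span (Set.mem_image2_of_mem hc hd)
  by_cases hab : 1 ≤ a ∧ a < b ∧ b ≤ n
  swap
  · rw [kv, dif_neg hab, map_zero]
    exact Submodule.zero_mem _
  obtain ⟨ha, hab, hbn⟩ := hab
  by_cases hak : a = k
  · subst hak
    by_cases hbk : b = a + 1
    · subst hbk
      rw [h.apply_kv_self_succ a hk hkn]
      exact Submodule.smul_mem _ _ (mem _ (by simp) _ (by simp))
    · rw [h.apply_kv_self_left a b hk (by omega) hbn]
      refine add_mem (add_mem ?_ ?_) ?_ <;>
        exact Submodule.smul_mem _ _ (mem _ (by simp) _ (by simp))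
  by_cases hak' : a = k + 1
  · subst hak'
    rw [h.apply_kv_succ_left k b hk (by omega) hbn]
    exact mem _ (by simp) _ (by simp)
  by_cases hbk : b = k
  · subst hbk
    rw [h.apply_kv_self_right b a ha (by omega) hkn]
    refine add_mem (add_mem ?_ ?_) ?_ <;>
      exact Submodule.smul_mem _ _ (mem _ (by simp) _ (by simp))
  by_cases hbk' : b = k + 1
  · subst hbk'
    rw [h.apply_kv_succ_right k a ha (by omega) hkn]
    exact mem _ (by simp) _ (by simp)
  rw [h.apply_kv_eq_self hk hkn hak hak' hbk hbk']
  exact mem _ (by simp) _ (by simp)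

theorem apply_apply_kv_comm_of_avoid (h : IsKrammerAction q t ρ) {k l a b : ℕ}
    (hkl : k + 2 ≤ l ∨ l + 2 ≤ k) (hk : 1 ≤ k) (hkn : k + 1 ≤ n) (hl : 1 ≤ l) (hln : l + 1 ≤ n)
    (hal : a ≠ l) (hal' : a ≠ l + 1) (hbl : b ≠ l) (hbl' : b ≠ l + 1) :
    ρ k (ρ l (kv R n a b)) = ρ l (ρ k (kv R n a b)) := by
  have span_fixed :
      Submodule.span R (Set.image2 (kv R n) {a, b, k, k + 1} {a, b, k, k + 1}) ≤
        LinearMap.eqLocus (ρ l) LinearMap.id := by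
    rw [Submodule.span_le]
    rintro _ ⟨c, hc, d, hd, rfl⟩
    simp only [Set.mem_insert_iff, Set.mem_singleton_iff] at hc hd
    exact h.apply_kv_eq_self hl hln (by omega) (by omega) (by omega) (by omega)
  rw [h.apply_kv_eq_self hl hln hal hal' hbl hbl']
  exact (span_fixed (h.apply_kv_mem_span hk hkn)).symm

theorem apply_apply_kv_comm_of_straddle (h : IsKrammerAction q t ρ) {i j a b : ℕ}
    (hij : i + 2 ≤ j) (hi : 1 ≤ i) (hjn : j + 1 ≤ n)
    (ha : a = i ∨ a = i + 1) (hb : b = j ∨ b = j + 1) :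
    ρ i (ρ j (kv R n a b)) = ρ j (ρ i (kv R n a b)) := by
  rcases ha with rfl | rfl <;> rcases hb with rfl | rfl <;>
    simp (disch := omega) only [map_add, map_smul, h.apply_kv_of_disjoint, h.apply_kv_succ_left,
      h.apply_kv_succ_right, h.apply_kv_self_left, h.apply_kv_self_right]
  module

theorem comp_comm (h : IsKrammerAction q t ρ) {i j : ℕ} (hij : i + 2 ≤ j) (hi : 1 ≤ i)
    (hjn : j + 1 ≤ n) : ρ i ∘ₗ ρ j = ρ j ∘ₗ ρ i := by
  refine linearMap_ext_kv fun a b ha hab hbn => ?_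
  simp only [LinearMap.comp_apply]
  by_cases hj : a ≠ j ∧ a ≠ j + 1 ∧ b ≠ j ∧ b ≠ j + 1
  · exact h.apply_apply_kv_comm_of_avoid (.inl hij) hi (by omega) (by omega) hjn
      hj.1 hj.2.1 hj.2.2.1 hj.2.2.2
  by_cases hi' : a ≠ i ∧ a ≠ i + 1 ∧ b ≠ i ∧ b ≠ i + 1
  · exact (h.apply_apply_kv_comm_of_avoid (.inr hij) (by omega) hjn hi (by omega)
      hi'.1 hi'.2.1 hi'.2.2.1 hi'.2.2.2).symm
  exact h.apply_apply_kv_comm_of_straddle hij hi hjn (by omega) (by omega)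

end IsKrammerAction

end

theorem stmt_3_general {R : Type*} [CommRing R] (n : ℕ) (q t : R)
    (ρ : ℕ → ((KIdx n →₀ R) →ₗ[R] (KIdx n →₀ R)))
    (hA : ∀ i, 1 ≤ i → i + 1 ≤ n →
      ρ i (kv R n i (i+1)) = (t * q ^ 2) • kv R n i (i+1))
    (hB : ∀ i a b, 1 ≤ i → i + 1 ≤ n → 1 ≤ a → a < b → b ≤ n →
      i ≠ a → i ≠ b → i + 1 ≠ a → i + 1 ≠ b → ρ i (kv R n a b) = kv R n a b)
    (hC1 : ∀ i b, 1 ≤ i → i + 1 < b → b ≤ n → ρ i (kv R n (i+1) b) = kv R n i b)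
    (hC2 : ∀ i a, 1 ≤ a → a < i → i + 1 ≤ n → ρ i (kv R n a (i+1)) = kv R n a i)
    (hD1 : ∀ i b, 1 ≤ i → i + 1 < b → b ≤ n →
      ρ i (kv R n i b) =
        (t * q * (q - 1)) • kv R n i (i+1) + (1 - q) • kv R n i b
          + q • kv R n (i+1) b)
    (hD2 : ∀ i a, 1 ≤ a → a < i → i + 1 ≤ n →
      ρ i (kv R n a i) =
        (1 - q) • kv R n a i + q • kv R n a (i+1)
          + (q * (q - 1)) • kv R n i (i+1)) :
    ∀ i j, 1 ≤ i → i + 1 ≤ n → 1 ≤ j → j + 1 ≤ n → (i + 2 ≤ j ∨ j + 2 ≤ i) →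
      ρ i ∘ₗ ρ j = ρ j ∘ₗ ρ i := by
  have hρ : IsKrammerAction q t ρ := ⟨hA, hB, hC1, hC2, hD1, hD2⟩
  rintro i j hi hin hj hjn (hij | hji)
  · exact hρ.comp_comm hij hi hjn
  · exact (hρ.comp_comm hji hj hin).symm

/-- Far commutation for the Krammer representation: if `ρ i` (for `1 ≤ i ≤ n-1`)
acts on the basis `v_{ab}` (`1 ≤ a < b ≤ n`) by Krammer's formulas, then
`ρ i` and `ρ j` commute whenever `|i - j| ≥ 2`. -/
theorem stmt_3 {R : Type*} [CommRing R] (n : ℕ) (q t : R)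
    (hq : IsUnit q) (ht : IsUnit t)
    (ρ : ℕ → ((KIdx n →₀ R) →ₗ[R] (KIdx n →₀ R)))
    (hA : ∀ i, 1 ≤ i → i + 1 ≤ n →
      ρ i (kv R n i (i+1)) = (t * q ^ 2) • kv R n i (i+1))
    (hB : ∀ i a b, 1 ≤ i → i + 1 ≤ n → 1 ≤ a → a < b → b ≤ n →
      i ≠ a → i ≠ b → i + 1 ≠ a → i + 1 ≠ b → ρ i (kv R n a b) = kv R n a b)
    (hC1 : ∀ i b, 1 ≤ i → i + 1 < b → b ≤ n → ρ i (kv R n (i+1) b) = kv R n i b)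
    (hC2 : ∀ i a, 1 ≤ a → a < i → i + 1 ≤ n → ρ i (kv R n a (i+1)) = kv R n a i)
    (hD1 : ∀ i b, 1 ≤ i → i + 1 < b → b ≤ n →
      ρ i (kv R n i b) =
        (t * q * (q - 1)) • kv R n i (i+1) + (1 - q) • kv R n i b
          + q • kv R n (i+1) b)
    (hD2 : ∀ i a, 1 ≤ a → a < i → i + 1 ≤ n →
      ρ i (kv R n a i) =
        (1 - q) • kv R n a i + q • kv R n a (i+1)
          + (q * (q - 1)) • kv R n i (i+1)) :
    ∀ i j, 1 ≤ i → i + 1 ≤ n → 1 ≤ j → j + 1 ≤ n → (i + 2 ≤ j ∨ j + 2 ≤ i) →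
      ρ i ∘ₗ ρ j = ρ j ∘ₗ ρ i :=
  stmt_3_general n q t ρ hA hB hC1 hC2 hD1 hD2
end

section
/- Each Krammer representation map ρ(σ_i) is invertible on the free module with basis v_{ij}, 1 ≤ i < j ≤ n; consequently ρ extends to a group homomorphism from the braid group B_n (presented by the Artin relations) to GL of the module. -/
/-- The Artin relations for the braid group `B_n`, as elements of the free
group on generators `σ_1, …, σ_{n-1}` (indexed by natural numbers). -/
def braidRels (n : ℕ) : Set (FreeGroup ℕ) :=
  {w | ∃ i j, 1 ≤ i ∧ i + 1 ≤ n ∧ 1 ≤ j ∧ j + 1 ≤ n ∧ i + 2 ≤ j ∧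
      w = FreeGroup.of i * FreeGroup.of j * (FreeGroup.of i)⁻¹ *
        (FreeGroup.of j)⁻¹} ∪
  {w | ∃ i, 1 ≤ i ∧ i + 2 ≤ n ∧
      w = FreeGroup.of i * FreeGroup.of (i+1) * FreeGroup.of i *
        (FreeGroup.of (i+1) * FreeGroup.of i * FreeGroup.of (i+1))⁻¹}

/-!
On a basis vector `v_{ab}` each `ρ i` acts by Krammer's explicit formulas, so every identity
between the operators can be checked on the `v_{ab}` after splitting on the position of `a` and
`b` relative to the indices involved. This shows that `ρ i` satisfies the cubic
`(x - t q²)(x - 1)(x + q) = 0`, whose constant term `t q³` is a unit, so `ρ i` is invertible,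
and that the `ρ i` satisfy the far-commutation and braid relations, so they define a
homomorphism on the presented braid group.
-/

open Polynomial

theorem Polynomial.isUnit_of_aeval_eq_zero {R A : Type*} [CommRing R] [Ring A] [Algebra R A]
    {x : A} {p : R[X]} (hp : aeval x p = 0) (h0 : IsUnit (p.coeff 0)) : IsUnit x := by
  have hx : x * aeval x p.divX = algebraMap R A (-p.coeff 0) := by
    have := congrArg (aeval x) (X_mul_divX_add p)
    rw [hp, map_add, map_mul, aeval_X, aeval_C] at this
    rw [map_neg, eq_neg_iff_add_eq_zero, this]
  have hcomm : Commute x (aeval x p.divX) := by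
    have := congrArg (aeval x) (X_mul (p := p.divX))
    rwa [map_mul, map_mul, aeval_X] at this
  exact (hcomm.isUnit_mul_iff.1 (hx ▸ h0.neg.map _)).1

theorem lhom_ext_kv {R M : Type*} [CommRing R] [AddCommGroup M] [Module R M] {n : ℕ}
    {f g : (KIdx n →₀ R) →ₗ[R] M}
    (h : ∀ a b, 1 ≤ a → a < b → b ≤ n → f (kv R n a b) = g (kv R n a b)) : f = g := by
  refine Finsupp.lhom_ext fun ⟨⟨a, b⟩, hab⟩ r => ?_
  have hsingle : Finsupp.single ⟨(a, b), hab⟩ r = r • kv R n a b := by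
    rw [kv, dif_pos hab]
    exact (Finsupp.smul_single_one _ r).symm
  rw [hsingle, map_smul, map_smul, h a b hab.1 hab.2.1 hab.2.2]

structure IsKrammer {R : Type*} [CommRing R] (n : ℕ) (q t : R)
    (ρ : ℕ → Module.End R (KIdx n →₀ R)) : Prop where
  apply_kv_self_succ : ∀ i, 1 ≤ i → i + 1 ≤ n →
    ρ i (kv R n i (i+1)) = (t * q ^ 2) • kv R n i (i+1)
  apply_kv_of_disjoint : ∀ i a b, 1 ≤ i → i + 1 ≤ n → 1 ≤ a → a < b → b ≤ n →
    i ≠ a → i ≠ b → i + 1 ≠ a → i + 1 ≠ b → ρ i (kv R n a b) = kv R n a b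
  apply_kv_succ_left : ∀ i b, 1 ≤ i → i + 1 < b → b ≤ n → ρ i (kv R n (i+1) b) = kv R n i b
  apply_kv_succ_right : ∀ i a, 1 ≤ a → a < i → i + 1 ≤ n → ρ i (kv R n a (i+1)) = kv R n a i
  apply_kv_self_left : ∀ i b, 1 ≤ i → i + 1 < b → b ≤ n →
    ρ i (kv R n i b) =
      (t * q * (q - 1)) • kv R n i (i+1) + (1 - q) • kv R n i b + q • kv R n (i+1) b
  apply_kv_self_right : ∀ i a, 1 ≤ a → a < i → i + 1 ≤ n →
    ρ i (kv R n a i) =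
      (1 - q) • kv R n a i + q • kv R n a (i+1) + (q * (q - 1)) • kv R n i (i+1)

namespace IsKrammer

variable {R : Type*} [CommRing R] {n : ℕ} {q t : R} {ρ : ℕ → Module.End R (KIdx n →₀ R)}

theorem cubic (hρ : IsKrammer n q t ρ) {i : ℕ} (hi : 1 ≤ i) (hin : i + 1 ≤ n) :
    aeval (ρ i) ((X - C (t * q ^ 2)) * (X - 1) * (X + C q)) = 0 := by
  simp only [map_mul, map_sub, map_add, aeval_X, aeval_C, map_one, Algebra.algebraMap_eq_smul_one]
  refine lhom_ext_kv fun a b ha hab hb => ?_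
  simp only [Module.End.mul_apply, LinearMap.sub_apply, LinearMap.add_apply, LinearMap.smul_apply,
    Module.End.one_apply, LinearMap.zero_apply, map_sub, map_add, map_smul]
  rcases show i = a ∨ i + 1 = a ∨ (a ≠ i ∧ a ≠ i + 1) by omega with rfl | rfl | ⟨_, _⟩ <;>
    rcases show i = b ∨ i + 1 = b ∨ (b ≠ i ∧ b ≠ i + 1) by omega with rfl | rfl | ⟨_, _⟩ <;>
    first
      | (exfalso; omega)
      | (simp (disch := omega) only [hρ.apply_kv_self_succ, hρ.apply_kv_of_disjoint,
            hρ.apply_kv_succ_left, hρ.apply_kv_succ_right, hρ.apply_kv_self_left,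
            hρ.apply_kv_self_right, map_add, map_smul]; module)

theorem commute (hρ : IsKrammer n q t ρ) {i j : ℕ} (hi : 1 ≤ i) (hij : i + 2 ≤ j)
    (hjn : j + 1 ≤ n) :
    Commute (ρ i) (ρ j) := by
  refine lhom_ext_kv fun a b ha hab hb => ?_
  simp only [Module.End.mul_apply]
  rcases show i = a ∨ i + 1 = a ∨ j = a ∨ j + 1 = a ∨ (a ≠ i ∧ a ≠ i + 1 ∧ a ≠ j ∧ a ≠ j + 1)
      by omega with rfl | rfl | rfl | rfl | ⟨_, _, _, _⟩ <;>
    rcases show i = b ∨ i + 1 = b ∨ j = b ∨ j + 1 = b ∨ (b ≠ i ∧ b ≠ i + 1 ∧ b ≠ j ∧ b ≠ j + 1)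
      by omega with rfl | rfl | rfl | rfl | ⟨_, _, _, _⟩ <;>
    first
      | (exfalso; omega)
      | ((simp (disch := omega) only [hρ.apply_kv_self_succ, hρ.apply_kv_of_disjoint,
            hρ.apply_kv_succ_left, hρ.apply_kv_succ_right, hρ.apply_kv_self_left,
            hρ.apply_kv_self_right, map_add, map_smul]) <;> module)

theorem braid (hρ : IsKrammer n q t ρ) {i : ℕ} (hi : 1 ≤ i) (hin : i + 2 ≤ n) :
    ρ i * ρ (i + 1) * ρ i = ρ (i + 1) * ρ i * ρ (i + 1) := by
  refine lhom_ext_kv fun a b ha hab hb => ?_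
  simp only [Module.End.mul_apply]
  rcases show i = a ∨ i + 1 = a ∨ i + 2 = a ∨ (a ≠ i ∧ a ≠ i + 1 ∧ a ≠ i + 2)
      by omega with rfl | rfl | rfl | ⟨_, _, _⟩ <;>
    rcases show i = b ∨ i + 1 = b ∨ i + 2 = b ∨ (b ≠ i ∧ b ≠ i + 1 ∧ b ≠ i + 2)
      by omega with rfl | rfl | rfl | ⟨_, _, _⟩ <;>
    first
      | (exfalso; omega)
      -- `add_assoc, Nat.reduceAdd` rewrite `i + 1 + 1` to `i + 2`, where `ρ (i + 1)` acts
      | ((simp (disch := omega) only [hρ.apply_kv_self_succ, hρ.apply_kv_of_disjoint,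
            hρ.apply_kv_succ_left, hρ.apply_kv_succ_right, hρ.apply_kv_self_left,
            hρ.apply_kv_self_right, map_add, map_smul, add_assoc, Nat.reduceAdd]) <;> module)

theorem isUnit (hρ : IsKrammer n q t ρ) (hq : IsUnit q) (ht : IsUnit t) {i : ℕ} (hi : 1 ≤ i)
    (hin : i + 1 ≤ n) : IsUnit (ρ i) := by
  have hcoeff : IsUnit (((X - C (t * q ^ 2)) * (X - 1) * (X + C q)).coeff 0) := by
    convert ht.mul (hq.pow 3) using 1
    simp only [coeff_zero_eq_eval_zero, eval_mul, eval_sub, eval_add, eval_X, eval_C, eval_one]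
    ring
  exact isUnit_of_aeval_eq_zero (A := Module.End R (KIdx n →₀ R)) (hρ.cubic hi hin) hcoeff

end IsKrammer

theorem lift_eq_one_of_mem_braidRels {G : Type*} [Group G] {n : ℕ} {f : ℕ → G}
    (hcomm : ∀ i j, 1 ≤ i → i + 2 ≤ j → j + 1 ≤ n → Commute (f i) (f j))
    (hbraid : ∀ i, 1 ≤ i → i + 2 ≤ n → f i * f (i + 1) * f i = f (i + 1) * f i * f (i + 1)) :
    ∀ r ∈ braidRels n, FreeGroup.lift f r = 1 := by
  rintro r (⟨i, j, hi, -, -, hjn, hij, rfl⟩ | ⟨i, hi, hin, rfl⟩)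
  · simp only [map_mul, map_inv, FreeGroup.lift_apply_of, (hcomm i j hi hij hjn).eq]
    group
  · simp only [map_mul, map_inv, FreeGroup.lift_apply_of, hbraid i hi hin, mul_inv_cancel]

theorem exists_braidRels_hom_units {M : Type*} [Monoid M] {n : ℕ} {g : ℕ → M}
    (hunit : ∀ i, 1 ≤ i → i + 1 ≤ n → IsUnit (g i))
    (hcomm : ∀ i j, 1 ≤ i → i + 2 ≤ j → j + 1 ≤ n → Commute (g i) (g j))
    (hbraid : ∀ i, 1 ≤ i → i + 2 ≤ n → g i * g (i + 1) * g i = g (i + 1) * g i * g (i + 1)) :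
    ∃ φ : PresentedGroup (braidRels n) →* Mˣ,
      ∀ i, 1 ≤ i → i + 1 ≤ n → (φ (PresentedGroup.of i) : M) = g i := by
  classical
  let f : ℕ → Mˣ := fun k => if h : 1 ≤ k ∧ k + 1 ≤ n then (hunit k h.1 h.2).unit else 1
  have hf : ∀ k, 1 ≤ k → k + 1 ≤ n → (f k : M) = g k := fun k hk hkn => by
    simp only [f, dif_pos (And.intro hk hkn), IsUnit.unit_spec]
  have hrels : ∀ r ∈ braidRels n, FreeGroup.lift f r = 1 := by
    refine lift_eq_one_of_mem_braidRels (fun i j hi hij hjn => ?_) (fun i hi hin => ?_)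
    · refine Units.ext ?_
      simp only [Units.val_mul, hf i hi (by omega), hf j (by omega) hjn]
      exact hcomm i j hi hij hjn
    · refine Units.ext ?_
      simp only [Units.val_mul, hf i hi (by omega), hf (i + 1) (by omega) hin]
      exact hbraid i hi hin
  exact ⟨PresentedGroup.toGroup hrels, fun i hi hin => by
    rw [PresentedGroup.toGroup.of, hf i hi hin]⟩

/-- Each Krammer operator `ρ i` is invertible, and `ρ` extends to a group
homomorphism from the braid group `B_n` (presented by the Artin relations)
to the group of units of the endomorphism ring of the module. -/
theorem stmt_5 {R : Type*} [CommRing R] (n : ℕ) (q t : R)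
    (hq : IsUnit q) (ht : IsUnit t)
    (ρ : ℕ → ((KIdx n →₀ R) →ₗ[R] (KIdx n →₀ R)))
    (hA : ∀ i, 1 ≤ i → i + 1 ≤ n →
      ρ i (kv R n i (i+1)) = (t * q ^ 2) • kv R n i (i+1))
    (hB : ∀ i a b, 1 ≤ i → i + 1 ≤ n → 1 ≤ a → a < b → b ≤ n →
      i ≠ a → i ≠ b → i + 1 ≠ a → i + 1 ≠ b → ρ i (kv R n a b) = kv R n a b)
    (hC1 : ∀ i b, 1 ≤ i → i + 1 < b → b ≤ n → ρ i (kv R n (i+1) b) = kv R n i b)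
    (hC2 : ∀ i a, 1 ≤ a → a < i → i + 1 ≤ n → ρ i (kv R n a (i+1)) = kv R n a i)
    (hD1 : ∀ i b, 1 ≤ i → i + 1 < b → b ≤ n →
      ρ i (kv R n i b) =
        (t * q * (q - 1)) • kv R n i (i+1) + (1 - q) • kv R n i b
          + q • kv R n (i+1) b)
    (hD2 : ∀ i a, 1 ≤ a → a < i → i + 1 ≤ n →
      ρ i (kv R n a i) =
        (1 - q) • kv R n a i + q • kv R n a (i+1)
          + (q * (q - 1)) • kv R n i (i+1)) :
    (∀ i, 1 ≤ i → i + 1 ≤ n → IsUnit (ρ i)) ∧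
    ∃ φ : PresentedGroup (braidRels n) →*
        ((KIdx n →₀ R) →ₗ[R] (KIdx n →₀ R))ˣ,
      ∀ i, 1 ≤ i → i + 1 ≤ n →
        ((φ (PresentedGroup.of i) : ((KIdx n →₀ R) →ₗ[R] (KIdx n →₀ R))ˣ)
          : (KIdx n →₀ R) →ₗ[R] (KIdx n →₀ R)) = ρ i := by
  have hρ : IsKrammer n q t ρ := ⟨hA, hB, hC1, hC2, hD1, hD2⟩
  have hunit : ∀ i, 1 ≤ i → i + 1 ≤ n → IsUnit (ρ i) := fun i hi hin => hρ.isUnit hq ht hi hin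
  exact ⟨hunit, exists_braidRels_hom_units hunit (fun i j hi hij hjn => hρ.commute hi hij hjn)
    (fun i hi hin => hρ.braid hi hin)⟩
end

section
/- With the hypotheses of the BMW module setup (G_i invertible, braid relations G_i G_{i+1} G_i = G_{i+1} G_i G_{i+1}, far commutation, and G_s v = κ v for s ≤ n−3), if j < i < i+1 < k then κ⁻¹ G_i T_{jk} = T_{jk}, where T_{jk} = G_j⋯G_{k-2} E_{k-1}⋯E_{n-1} v. -/
/-!
Split `G_j ⋯ G_{k-2} = A (G_{i-1} G_i) B`, where `A` involves only generators of index `≤ i-2`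
and `B`, like `E_{k-1} ⋯ E_{n-1}`, only indices `≥ i+1`. Then `G_i` commutes past `A`, the braid
relation rewrites `G_i G_{i-1} G_i` as `G_{i-1} G_i G_{i-1}`, and the last `G_{i-1}` commutes past
`B` and the `E`-word down to `v`, on which it acts by `κ`; centrality of `κ` finishes.
-/

/-- The ordered product `G_j G_{j+1} ⋯ G_{k-2}`. -/
def Gword {C : Type*} [Ring C] (G : ℕ → C) (j k : ℕ) : C :=
  ((List.range' j (k - 1 - j)).map G).prod

/-- The ordered product `E_{k-1} E_k ⋯ E_{n-1}`. -/
def Eword {C : Type*} [Ring C] (E : ℕ → C) (k n : ℕ) : C :=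
  ((List.range' (k - 1) (n - k + 1)).map E).prod

theorem commute_prod_map_range' {M : Type*} [Monoid M] {x : M} {f : ℕ → M} {s m : ℕ}
    (h : ∀ r, s ≤ r → r < s + m → Commute x (f r)) :
    Commute x ((List.range' s m).map f).prod :=
  Commute.list_prod_right _ _ fun _ hy => by
    obtain ⟨r, hr, rfl⟩ := List.mem_map.mp hy
    rw [List.mem_range'_1] at hr
    exact h r hr.1 hr.2

section

variable {C : Type*} [Ring C]

theorem commute_Gword {G : ℕ → C} {x : C} {j k : ℕ}
    (h : ∀ r, j ≤ r → r + 2 ≤ k → Commute x (G r)) : Commute x (Gword G j k) :=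
  commute_prod_map_range' fun r hjr hrk => h r hjr (by omega)

theorem commute_Eword {E : ℕ → C} {x : C} {k n : ℕ}
    (h : ∀ r, k ≤ r + 1 → Commute x (E r)) : Commute x (Eword E k n) :=
  commute_prod_map_range' fun r hkr _ => h r (by omega)

theorem Gword_eq_Gword_mul_mul_Gword {G : ℕ → C} {j k m : ℕ}
    (hjm : j ≤ m) (hmk : m + 3 ≤ k) :
    Gword G j k = Gword G j (m + 1) * (G m * G (m + 1)) * Gword G (m + 2) k := by
  have hsplit : List.range' j (k - 1 - j) =
      List.range' j (m - j) ++ m :: (m + 1) :: List.range' (m + 2) (k - 3 - m) := by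
    rw [show k - 1 - j = (m - j) + ((k - 3 - m) + 2) by omega, ← List.range'_append_1,
      show j + (m - j) = m by omega, List.range'_succ, List.range'_succ]
  simp [Gword, hsplit, show k - 1 - (m + 2) = k - 3 - m by omega, mul_assoc]

variable {G E : ℕ → C}

theorem G_succ_mul_Gword_mul_Eword
    (hGGfar : ∀ p r, p + 2 ≤ r ∨ r + 2 ≤ p → G p * G r = G r * G p)
    (hGEfar : ∀ p r, p + 2 ≤ r ∨ r + 2 ≤ p → G p * E r = E r * G p)
    (hbraid : ∀ s, G s * G (s+1) * G s = G (s+1) * G s * G (s+1))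
    {j k m : ℕ} (n : ℕ) (hjm : j ≤ m) (hmk : m + 3 ≤ k) :
    G (m + 1) * (Gword G j k * Eword E k n) = Gword G j k * Eword E k n * G m := by
  have hA : Commute (G (m + 1)) (Gword G j (m + 1)) :=
    commute_Gword fun r _ hr => hGGfar _ _ (by omega)
  have hB : Commute (G m) (Gword G (m + 2) k) :=
    commute_Gword fun r hr _ => hGGfar _ _ (by omega)
  have hW : Commute (G m) (Eword E k n) :=
    commute_Eword fun r hr => hGEfar _ _ (by omega)
  rw [Gword_eq_Gword_mul_mul_Gword hjm hmk]
  calc G (m + 1) * (Gword G j (m + 1) * (G m * G (m + 1)) * Gword G (m + 2) k * Eword E k n)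
      = Gword G j (m + 1) * (G (m + 1) * G m * G (m + 1)) * Gword G (m + 2) k * Eword E k n := by
        simp only [← mul_assoc, hA.eq]
    _ = Gword G j (m + 1) * (G m * G (m + 1)) * (G m * Gword G (m + 2) k) * Eword E k n := by
        rw [← hbraid]; simp only [mul_assoc]
    _ = Gword G j (m + 1) * (G m * G (m + 1)) * Gword G (m + 2) k * Eword E k n * G m := by
        rw [hB.eq]; simp only [mul_assoc, hW.eq]

end

theorem stmt_10_general {C V : Type*} [Ring C] [AddCommGroup V] [Module C V]
    (n : ℕ) (G E : ℕ → C) (κ κinv : C)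
    (hκcentral : ∀ x : C, κ * x = x * κ)
    (hκ2 : κinv * κ = 1)
    (v : V) (hGv : ∀ s, s + 3 ≤ n → G s • v = κ • v)
    (hGGfar : ∀ p r, p + 2 ≤ r ∨ r + 2 ≤ p → G p * G r = G r * G p)
    (hGEfar : ∀ p r, p + 2 ≤ r ∨ r + 2 ≤ p → G p * E r = E r * G p)
    (hbraid : ∀ s, G s * G (s+1) * G s = G (s+1) * G s * G (s+1))
    (i j k : ℕ) (hji : j < i) (hik : i + 1 < k) (hkn : k ≤ n) :
    κinv • (G i • ((Gword G j k * Eword E k n) • v)) =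
      (Gword G j k * Eword E k n) • v := by
  obtain ⟨m, rfl⟩ : ∃ m, i = m + 1 := ⟨i - 1, by omega⟩
  rw [← mul_smul (G (m + 1)),
    G_succ_mul_Gword_mul_Eword hGGfar hGEfar hbraid n (by omega) (by omega), mul_smul,
    hGv m (by omega), ← mul_smul _ κ, ← hκcentral, mul_smul, smul_smul, hκ2, one_smul]

/-- Case B (second subcase) of the paper: with the braid relations, far
commutation, and `G_s v = κ v` for `s ≤ n-3`, if `j < i < i+1 < k ≤ n` then
`κ⁻¹ G_i T_{jk} = T_{jk}` where `T_{jk} = G_j ⋯ G_{k-2} E_{k-1} ⋯ E_{n-1} v`. -/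
theorem stmt_10 {C V : Type*} [Ring C] [AddCommGroup V] [Module C V]
    (n : ℕ) (G E : ℕ → C) (κ κinv : C)
    (hκcentral : ∀ x : C, κ * x = x * κ)
    (hκ1 : κ * κinv = 1) (hκ2 : κinv * κ = 1)
    (v : V) (hGv : ∀ s, s + 3 ≤ n → G s • v = κ • v)
    (hGGfar : ∀ p r, p + 2 ≤ r ∨ r + 2 ≤ p → G p * G r = G r * G p)
    (hGEfar : ∀ p r, p + 2 ≤ r ∨ r + 2 ≤ p → G p * E r = E r * G p)
    (hbraid : ∀ s, G s * G (s+1) * G s = G (s+1) * G s * G (s+1))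
    (i j k : ℕ) (hj : 1 ≤ j) (hji : j < i) (hik : i + 1 < k) (hkn : k ≤ n) :
    κinv • (G i • ((Gword G j k * Eword E k n) • v)) =
      (Gword G j k * Eword E k n) • v :=
  stmt_10_general n G E κ κinv hκcentral hκ2 v hGv hGGfar hGEfar hbraid i j k hji hik hkn
end

section
/- With the BMW module setup, if j < i and T_{j,i+1} = G_j⋯G_{i-1} E_i⋯E_{n-1} v, then κ⁻¹ G_i T_{j,i+1} = κ⁻¹ T_{j,i}, where T_{j,i} = G_j⋯G_{i-2} E_{i-1}⋯E_{n-1} v; i.e., G_i G_{i-1} E_i ⋯ E_{n-1} v = E_{i-1} E_i ⋯ E_{n-1} v follows from the relation G_i G_{i-1} E_i = E_{i-1} E_i. -/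
/-- Case C (`j < i`) of the paper: with the BMW relation
`G_i G_{i-1} E_i = E_{i-1} E_i`, far commutation, and `G_s v = κ v` for
`s ≤ n-3`, one has `κ⁻¹ G_i T_{j,i+1} = κ⁻¹ T_{j,i}` where
`T_{jk} = G_j ⋯ G_{k-2} E_{k-1} ⋯ E_{n-1} v`. -/
theorem stmt_11 {C V : Type*} [Ring C] [AddCommGroup V] [Module C V]
    (n : ℕ) (G E : ℕ → C) (κ κinv : C)
    (hκcentral : ∀ x : C, κ * x = x * κ)
    (hκ1 : κ * κinv = 1) (hκ2 : κinv * κ = 1)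
    (v : V) (hGv : ∀ s, s + 3 ≤ n → G s • v = κ • v)
    (hGGfar : ∀ p r, p + 2 ≤ r ∨ r + 2 ≤ p → G p * G r = G r * G p)
    (hGEfar : ∀ p r, p + 2 ≤ r ∨ r + 2 ≤ p → G p * E r = E r * G p)
    (hGGE : ∀ s, 1 ≤ s → G s * G (s - 1) * E s = E (s - 1) * E s)
    (i j : ℕ) (hj : 1 ≤ j) (hji : j < i) (hin : i + 1 ≤ n) :
    κinv • (G i • ((Gword G j (i+1) * Eword E (i+1) n) • v)) =
      κinv • ((Gword G j i * Eword E i n) • v) := by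
  have key : G i * (Gword G j (i+1) * Eword E (i+1) n)
      = Gword G j i * Eword E i n := by
    -- split off the last factor of the G-word
    have hG : Gword G j (i+1) = Gword G j i * G (i-1) := by
      unfold Gword
      have h1 : i + 1 - 1 - j = (i - 1 - j) + 1 := by omega
      rw [h1, List.range'_concat, List.map_append, List.prod_append]
      have h2 : j + (i - 1 - j) = i - 1 := by omega
      simp [h2]
    -- split off the first factor of the E-words
    have hE1 : Eword E (i+1) n = E i * ((List.range' (i+1) (n-i-1)).map E).prod := by
      unfold Eword
      have h1 : n - (i+1) + 1 = (n - i - 1) + 1 := by omega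
      rw [h1, List.range'_succ]
      simp [show i + 1 - 1 = i from rfl]
    have hE2 : Eword E i n = E (i-1) * ((List.range' i (n-i)).map E).prod := by
      unfold Eword
      have h1 : n - i + 1 = (n - i) + 1 := by omega
      have h2 : i - 1 + 1 = i := by omega
      rw [h1, List.range'_succ, h2, List.map_cons, List.prod_cons]
    have hcomm : Commute (G i) (Gword G j i) := by
      apply Commute.list_prod_right
      intro y hy
      simp only [List.mem_map, List.mem_range'] at hy
      obtain ⟨p, hp, rfl⟩ := hy
      exact hGGfar i p (Or.inr (by omega))
    have hrange : ((List.range' i (n-i)).map E).prod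
        = E i * ((List.range' (i+1) (n-i-1)).map E).prod := by
      have h1 : n - i = (n - i - 1) + 1 := by omega
      rw [h1, List.range'_succ, List.map_cons, List.prod_cons]
      simp
    rw [hG, hE1, hE2, hrange]
    have hGGE' := hGGE i (by omega)
    set A := Gword G j i
    set P := ((List.range' (i+1) (n-i-1)).map E).prod
    calc G i * (A * G (i-1) * (E i * P))
        = (G i * A) * (G (i-1) * (E i * P)) := by simp [mul_assoc]
      _ = (A * G i) * (G (i-1) * (E i * P)) := by rw [hcomm.eq]
      _ = A * (G i * G (i-1) * E i * P) := by simp [mul_assoc]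
      _ = A * (E (i-1) * E i * P) := by rw [hGGE']
      _ = A * (E (i-1) * (E i * P)) := by simp [mul_assoc]
  have h : G i • ((Gword G j (i+1) * Eword E (i+1) n) • v)
      = (Gword G j i * Eword E i n) • v := by
    rw [← mul_smul, key]
  rw [h]
end
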